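/- arXiv:1701.03631 — 3 statements merged into one kernel-verified Lean document; each statement's English description precedes it below -/
import Mathlib

section
/- In the braid group B_m, for j ≠ i+1 the conjugation formula σ_i^{-1} a_{ij} σ_i = a_{i+1,j} [a_{i,i+1}^{-1}, a_{ij}^{-1}] holds, where [a,b] = a^{-1}b^{-1}ab. -/
/-- The "chain" `σ_{j-1} σ_{j-2} ⋯ σ_{i+1}` used in the definition of the standard
pure braid generators. -/
def braidChain {G : Type*} [Group G] (σ : ℕ → G) (i j : ℕ) : G :=
  (((List.range' (i + 1) (j - 1 - i)).reverse).map σ).prod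

/-- The standard pure braid generator
`a_{ij} = σ_{j-1} ⋯ σ_{i+1} σ_i² σ_{i+1}⁻¹ ⋯ σ_{j-1}⁻¹`. -/
def braidA {G : Type*} [Group G] (σ : ℕ → G) (i j : ℕ) : G :=
  braidChain σ i j * (σ i) ^ 2 * (braidChain σ i j)⁻¹

/-- `σ 1, …, σ (m-1)` satisfy the braid relations of the braid group `B_m`.
A relation `w = w'` holds in `B_m` iff `w(σ) = w'(σ)` for every such system in
every group, by the universal property of the presented group. -/
def IsBraidSystem {G : Type*} [Group G] (m : ℕ) (σ : ℕ → G) : Prop :=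
  (∀ i j, 1 ≤ i → i + 1 < j → j ≤ m - 1 → σ i * σ j = σ j * σ i) ∧
  (∀ i, 1 ≤ i → i + 1 ≤ m - 1 → σ i * σ (i + 1) * σ i = σ (i + 1) * σ i * σ (i + 1))

/-- Splitting off the last letter of the chain. -/
lemma braidChain_succ {G : Type*} [Group G] (σ : ℕ → G) (i j : ℕ) (hij : i + 1 < j) :
    braidChain σ i j = braidChain σ (i + 1) j * σ (i + 1) := by
  unfold braidChain
  have h1 : j - 1 - i = (j - 1 - (i + 1)) + 1 := by omega
  rw [h1, List.range'_succ, List.reverse_cons, List.map_append, List.prod_append]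
  simp

/-- The chain from `i` to `i+1` is empty. -/
lemma braidChain_self {G : Type*} [Group G] (σ : ℕ → G) (i : ℕ) :
    braidChain σ i (i + 1) = 1 := by
  unfold braidChain
  have : i + 1 - 1 - i = 0 := by omega
  rw [this]
  simp

/-- The key `B₃` identity, written with `t*t` for `t²`. -/
lemma braid3 {G : Type*} [Group G] (t u : G) (h : t * u * t = u * t * u) :
    t⁻¹ * (u * (t * t) * u⁻¹) * t =
      (u * u) * ((t * t) * (u * (t * t) * u⁻¹) * (t * t)⁻¹ * (u * (t * t) * u⁻¹)⁻¹) := by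
  have hΔu : (t * u * t) * u = t * (t * u * t) := by
    calc (t * u * t) * u = t * (u * t * u) := by group
      _ = t * (t * u * t) := by rw [← h]
  have hΔt : (t * u * t) * t = u * (t * u * t) := by
    calc (t * u * t) * t = (u * t * u) * t := by rw [h]
      _ = u * (t * u * t) := by group
  have h1 : u * t * u⁻¹ = t⁻¹ * u * t := by
    calc u * t * u⁻¹ = t⁻¹ * (t * u * t) * u⁻¹ := by group
      _ = t⁻¹ * (u * t * u) * u⁻¹ := by rw [h]
      _ = t⁻¹ * u * t := by group
  have h2 : u * (t * t) * u⁻¹ = t⁻¹ * (u * u) * t := by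
    calc u * (t * t) * u⁻¹ = (u * t * u⁻¹) * (u * t * u⁻¹) := by group
      _ = (t⁻¹ * u * t) * (t⁻¹ * u * t) := by rw [h1]
      _ = t⁻¹ * (u * u) * t := by group
  have e1 : u * u * t * u * u = u * t * (t * u * t) := by
    calc u * u * t * u * u = u * (u * t * u) * u := by group
      _ = u * (t * u * t) * u := by rw [← h]
      _ = u * ((t * u * t) * u) := by group
      _ = u * (t * (t * u * t)) := by rw [hΔu]
      _ = u * t * (t * u * t) := by group
  have hc : (t * t) * (u * u * t * u * u) = (u * u * t * u * u) * (t * t) := by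
    calc (t * t) * (u * u * t * u * u) = t * t * (u * t * (t * u * t)) := by rw [e1]
      _ = t * (t * u * t) * (t * u * t) := by group
      _ = ((t * u * t) * u) * (t * u * t) := by rw [← hΔu]
      _ = (t * u * t) * (u * (t * u * t)) := by group
      _ = (t * u * t) * ((t * u * t) * t) := by rw [← hΔt]
      _ = ((t * u * t) * t) * (u * (t * t)) := by group
      _ = (u * (t * u * t)) * (u * (t * t)) := by rw [hΔt]
      _ = u * ((t * u * t) * u) * (t * t) := by group
      _ = u * (t * (t * u * t)) * (t * t) := by rw [hΔu]
      _ = (u * t * (t * u * t)) * (t * t) := by group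
      _ = (u * u * t * u * u) * (t * t) := by rw [← e1]
  rw [h2]
  calc t⁻¹ * (t⁻¹ * (u * u) * t) * t
      = t⁻¹ * t⁻¹ * ((u * u * t * u * u) * (t * t)) * (t⁻¹ * t⁻¹ * (u⁻¹ * u⁻¹ * t)) := by
        group
    _ = t⁻¹ * t⁻¹ * ((t * t) * (u * u * t * u * u)) * (t⁻¹ * t⁻¹ * (u⁻¹ * u⁻¹ * t)) := by
        rw [← hc]
    _ = (u * u) * ((t * t) * (t⁻¹ * (u * u) * t) * (t * t)⁻¹ * (t⁻¹ * (u * u) * t)⁻¹) := by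
        group

/-- Conjugated version of `braid3`, matching the shape of the main goal. -/
lemma conj_step {G : Type*} [Group G] (t u c : G) (hcm : t * c = c * t)
    (hb : t * u * t = u * t * u) :
    t⁻¹ * (c * u * (t * t) * (c * u)⁻¹) * t =
      c * (u * u) * c⁻¹ *
        (1 * (t * t) * 1⁻¹ * (c * u * (t * t) * (c * u)⁻¹) * (1 * (t * t) * 1⁻¹)⁻¹ *
          (c * u * (t * t) * (c * u)⁻¹)⁻¹) := by
  have hcm1 : t⁻¹ * c = c * t⁻¹ := by
    calc t⁻¹ * c = t⁻¹ * (c * t) * t⁻¹ := by group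
      _ = t⁻¹ * (t * c) * t⁻¹ := by rw [← hcm]
      _ = c * t⁻¹ := by group
  have hcm2 : c⁻¹ * t = t * c⁻¹ := by
    calc c⁻¹ * t = c⁻¹ * (t * c) * c⁻¹ := by group
      _ = c⁻¹ * (c * t) * c⁻¹ := by rw [hcm]
      _ = t * c⁻¹ := by group
  have hcm3 : c * (t * t) = t * t * c := by
    calc c * (t * t) = (c * t) * t := by group
      _ = (t * c) * t := by rw [← hcm]
      _ = t * (c * t) := by group
      _ = t * (t * c) := by rw [← hcm]
      _ = t * t * c := by group
  have hcm4 : (t * t)⁻¹ * c⁻¹ = c⁻¹ * (t * t)⁻¹ := by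
    calc (t * t)⁻¹ * c⁻¹ = (c * (t * t))⁻¹ := by group
      _ = (t * t * c)⁻¹ := by rw [hcm3]
      _ = c⁻¹ * (t * t)⁻¹ := by group
  have key := braid3 t u hb
  calc t⁻¹ * (c * u * (t * t) * (c * u)⁻¹) * t
      = (t⁻¹ * c) * (u * (t * t) * u⁻¹) * (c⁻¹ * t) := by group
    _ = (c * t⁻¹) * (u * (t * t) * u⁻¹) * (t * c⁻¹) := by rw [hcm1, hcm2]
    _ = c * (t⁻¹ * (u * (t * t) * u⁻¹) * t) * c⁻¹ := by group
    _ = c * ((u * u) *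
          ((t * t) * (u * (t * t) * u⁻¹) * (t * t)⁻¹ * (u * (t * t) * u⁻¹)⁻¹)) * c⁻¹ := by
        rw [key]
    _ = c * (u * u) * c⁻¹ *
          ((c * (t * t)) * (u * (t * t) * u⁻¹) * ((t * t)⁻¹ * c⁻¹) *
            (c * (u * (t * t) * u⁻¹)⁻¹ * c⁻¹)) := by group
    _ = c * (u * u) * c⁻¹ *
          ((t * t * c) * (u * (t * t) * u⁻¹) * (c⁻¹ * (t * t)⁻¹) *
            (c * (u * (t * t) * u⁻¹)⁻¹ * c⁻¹)) := by rw [hcm3, hcm4]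
    _ = c * (u * u) * c⁻¹ *
          (1 * (t * t) * 1⁻¹ * (c * u * (t * t) * (c * u)⁻¹) * (1 * (t * t) * 1⁻¹)⁻¹ *
            (c * u * (t * t) * (c * u)⁻¹)⁻¹) := by group

/-- In the braid group `B_m`, for `j ≠ i+1`:
`σ_i⁻¹ a_{ij} σ_i = a_{i+1,j} [a_{i,i+1}⁻¹, a_{ij}⁻¹]`,
where `[a,b] = a⁻¹ b⁻¹ a b`, so that
`[a_{i,i+1}⁻¹, a_{ij}⁻¹] = a_{i,i+1} a_{ij} a_{i,i+1}⁻¹ a_{ij}⁻¹`. -/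
theorem stmt7 {G : Type*} [Group G] (m : ℕ) (σ : ℕ → G) (h : IsBraidSystem m σ)
    (i j : ℕ) (h1 : 1 ≤ i) (h2 : i < j) (h3 : j ≤ m) (h4 : j ≠ i + 1) :
    (σ i)⁻¹ * braidA σ i j * σ i =
      braidA σ (i + 1) j *
        (braidA σ i (i + 1) * braidA σ i j * (braidA σ i (i + 1))⁻¹ * (braidA σ i j)⁻¹) := by
  have hj : i + 1 < j := by omega
  have hb : σ i * σ (i + 1) * σ i = σ (i + 1) * σ i * σ (i + 1) :=
    h.2 i h1 (by omega)
  have hcm : σ i * braidChain σ (i + 1) j = braidChain σ (i + 1) j * σ i := by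
    have : Commute (σ i) (braidChain σ (i + 1) j) := by
      apply Commute.list_prod_right
      intro y hy
      simp only [List.mem_map, List.mem_reverse, List.mem_range'_1] at hy
      obtain ⟨k, ⟨hk1, hk2⟩, rfl⟩ := hy
      exact h.1 i k h1 (by omega) (by omega)
    exact this.eq
  unfold braidA
  rw [braidChain_succ σ i j hj, braidChain_self σ i]
  simp only [pow_two]
  exact conj_step (σ i) (σ (i + 1)) (braidChain σ (i + 1) j) hcm hb
end

section
/- In the braid group B_{g+n}, the elements τ_k = σ_g σ_{g-1} ··· σ_{k+1} σ_k² σ_{k+1}^{-1} ··· σ_{g-1}^{-1} σ_g^{-1}, k = 1,…,g, together with σ_{g+1},…,σ_{g+n-1}, satisfy all defining relations of the handlebody braid group B_{g,n}: σ_iσ_j = σ_jσ_i for |i−j| > 1; σ_iσ_{i+1}σ_i = σ_{i+1}σ_iσ_{i+1}; τ_kσ_i = σ_iτ_k for i ≥ g+2; τ_k(σ_{g+1}τ_kσ_{g+1}) = (σ_{g+1}τ_kσ_{g+1})τ_k; and τ_k(σ_{g+1}^{-1}τ_{k+l}σ_{g+1}) = (σ_{g+1}^{-1}τ_{k+l}σ_{g+1})τ_k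 for 1 ≤ k ≤ g−1 and 1 ≤ l ≤ g−k. -/
namespace Stmt14Aux

variable {G : Type*} [Group G]

/-- The "band" generator `y_{j,k} = σ_j ⋯ σ_{k+1} σ_k σ_{k+1}⁻¹ ⋯ σ_j⁻¹`. -/
def Ygen (σ : ℕ → G) (j k : ℕ) : G :=
  braidChain σ k (j + 1) * σ k * (braidChain σ k (j + 1))⁻¹

lemma chain_self (σ : ℕ → G) (j : ℕ) : braidChain σ j (j + 1) = 1 := by
  simp [braidChain]

lemma chain_succ (σ : ℕ → G) {k j : ℕ} (hkj : k ≤ j) :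
    braidChain σ k (j + 2) = σ (j + 1) * braidChain σ k (j + 1) := by
  unfold braidChain
  have h1 : j + 2 - 1 - k = (j - k) + 1 := by omega
  have h2 : j + 1 - 1 - k = j - k := by omega
  have h3 : k + 1 + (j - k) = j + 1 := by omega
  rw [h1, h2, List.range'_1_concat, List.reverse_append, h3]
  simp

lemma Ygen_self (σ : ℕ → G) (j : ℕ) : Ygen σ j j = σ j := by
  simp [Ygen, chain_self]

lemma Ygen_succ (σ : ℕ → G) {k j : ℕ} (hkj : k ≤ j) :
    Ygen σ (j + 1) k = σ (j + 1) * Ygen σ j k * (σ (j + 1))⁻¹ := by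
  unfold Ygen
  rw [chain_succ σ hkj]
  group

lemma tau_eq_sq (σ : ℕ → G) (k j : ℕ) :
    braidA σ k (j + 1) = (Ygen σ j k) ^ 2 := by
  unfold braidA Ygen
  simp only [pow_two]
  group

lemma commute_chain (σ : ℕ → G) {a : G} {k j : ℕ}
    (hc : ∀ m, k + 1 ≤ m → m ≤ j → Commute a (σ m)) :
    Commute a (braidChain σ k (j + 1)) := by
  unfold braidChain
  apply Commute.list_prod_right
  intro x hx
  simp only [List.mem_map, List.mem_reverse, List.mem_range'_1] at hx
  obtain ⟨m, hm, rfl⟩ := hx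
  exact hc m hm.1 (by omega)

/-- Abstract conjugation lemma: if `p,q` and `q,s` are braid pairs and `p`
commutes with `s`, then `q p q⁻¹, s` is a braid pair. -/
lemma braid_conj {p q s : G} (hpq : p * q * p = q * p * q)
    (hqs : q * s * q = s * q * s) (hps : p * s = s * p) :
    (q * p * q⁻¹) * s * (q * p * q⁻¹) = s * (q * p * q⁻¹) * s := by
  have hqsInv : q⁻¹ * (s⁻¹ * q⁻¹) = s⁻¹ * (q⁻¹ * s⁻¹) := by
    have := congrArg (fun x => x⁻¹) hqs
    simpa [mul_assoc] using this
  have hps' : s⁻¹ * p = p * s⁻¹ := by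
    calc s⁻¹ * p = s⁻¹ * (p * s) * s⁻¹ := by group
      _ = s⁻¹ * (s * p) * s⁻¹ := by rw [hps]
      _ = p * s⁻¹ := by group
  have e1 : q⁻¹ * s * q = s * q * s⁻¹ := by
    calc q⁻¹ * s * q = q⁻¹ * (s * q * s) * s⁻¹ := by group
      _ = q⁻¹ * (q * s * q) * s⁻¹ := by rw [← hqs]
      _ = s * q * s⁻¹ := by group
  have e2 : q * s⁻¹ * q⁻¹ = s⁻¹ * q⁻¹ * s := by
    calc q * s⁻¹ * q⁻¹ = q * (s⁻¹ * (q⁻¹ * s⁻¹)) * s := by group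
      _ = q * (q⁻¹ * (s⁻¹ * q⁻¹)) * s := by rw [← hqsInv]
      _ = s⁻¹ * q⁻¹ * s := by group
  have spz : s * p * s⁻¹ = p := by
    rw [← hps]; group
  calc (q * p * q⁻¹) * s * (q * p * q⁻¹)
      = q * p * (q⁻¹ * s * q) * (p * q⁻¹) := by group
    _ = q * p * (s * q * s⁻¹) * (p * q⁻¹) := by rw [e1]
    _ = q * (p * s) * q * (s⁻¹ * p) * q⁻¹ := by group
    _ = q * (s * p) * q * (p * s⁻¹) * q⁻¹ := by rw [hps, hps']
    _ = q * s * (p * q * p) * s⁻¹ * q⁻¹ := by group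
    _ = q * s * (q * p * q) * s⁻¹ * q⁻¹ := by rw [hpq]
    _ = (q * s * q) * p * (q * s⁻¹ * q⁻¹) := by group
    _ = (s * q * s) * p * (s⁻¹ * q⁻¹ * s) := by rw [hqs, e2]
    _ = s * q * (s * p * s⁻¹) * q⁻¹ * s := by group
    _ = s * q * p * q⁻¹ * s := by rw [spz]
    _ = s * (q * p * q⁻¹) * s := by group

/-- Abstract lemma for relation (4): if `a` and `s` satisfy the braid relation
then `a²` commutes with `s a² s`. -/
lemma rel4_abs {a s : G} (hab : a * s * a = s * a * s) :
    a ^ 2 * (s * a ^ 2 * s) = (s * a ^ 2 * s) * a ^ 2 := by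
  simp only [pow_two]
  calc a * a * (s * (a * a) * s)
      = a * (a * s * a) * (a * s) := by group
    _ = a * (s * a * s) * (a * s) := by rw [hab]
    _ = (a * s * a) * (s * a * s) := by group
    _ = (s * a * s) * (a * s * a) := by rw [hab]
    _ = s * a * (s * a * s) * a := by group
    _ = s * a * (a * s * a) * a := by rw [← hab]
    _ = (s * (a * a) * s) * (a * a) := by group

/-- Abstract lemma for relation (5). -/
lemma rel5_abs {a b s : G} (hbs : b * s * b = s * b * s)
    (hts : (b⁻¹ * a * b) * s = s * (b⁻¹ * a * b)) :
    a ^ 2 * (s⁻¹ * b ^ 2 * s) = (s⁻¹ * b ^ 2 * s) * a ^ 2 := by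
  simp only [pow_two]
  have h2 : s⁻¹ * (b * b) * s = b * (s * s) * b⁻¹ := by
    calc s⁻¹ * (b * b) * s = s⁻¹ * (b * (b * s * b)) * b⁻¹ := by group
      _ = s⁻¹ * (b * (s * b * s)) * b⁻¹ := by rw [hbs]
      _ = s⁻¹ * ((b * s * b) * s) * b⁻¹ := by group
      _ = s⁻¹ * ((s * b * s) * s) * b⁻¹ := by rw [hbs]
      _ = b * (s * s) * b⁻¹ := by group
  have c1 : a * (b * s * b⁻¹) = (b * s * b⁻¹) * a := by
    calc a * (b * s * b⁻¹) = b * ((b⁻¹ * a * b) * s) * b⁻¹ := by group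
      _ = b * (s * (b⁻¹ * a * b)) * b⁻¹ := by rw [hts]
      _ = (b * s * b⁻¹) * a := by group
  rw [h2]
  calc a * a * (b * (s * s) * b⁻¹)
      = a * (a * (b * s * b⁻¹)) * (b * s * b⁻¹) := by group
    _ = a * ((b * s * b⁻¹) * a) * (b * s * b⁻¹) := by rw [c1]
    _ = (a * (b * s * b⁻¹)) * (a * (b * s * b⁻¹)) := by group
    _ = ((b * s * b⁻¹) * a) * ((b * s * b⁻¹) * a) := by rw [c1]
    _ = (b * s * b⁻¹) * (a * (b * s * b⁻¹)) * a := by group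
    _ = (b * s * b⁻¹) * ((b * s * b⁻¹) * a) * a := by rw [c1]
    _ = b * (s * s) * b⁻¹ * (a * a) := by group

section BraidSystem

variable {g n : ℕ} {σ : ℕ → G} (h : IsBraidSystem (g + n) σ)

include h

lemma commute_Ygen :
    ∀ j k i, 1 ≤ k → k ≤ j → j + 1 < i → i ≤ g + n - 1 →
      Commute (σ i) (Ygen σ j k) := by
  intro j
  induction j with
  | zero => intro k i h1 h2 h3 h4; omega
  | succ j ih =>
    intro k i h1 h2 h3 h4
    rcases Nat.lt_or_ge k (j + 1) with hk | hk
    · have hkj : k ≤ j := by omega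
      rw [Ygen_succ σ hkj]
      have c1 : Commute (σ i) (σ (j + 1)) :=
        (h.1 (j + 1) i (by omega) (by omega) h4).symm
      have c2 : Commute (σ i) (Ygen σ j k) := ih k i h1 hkj (by omega) h4
      exact (c1.mul_right c2).mul_right c1.inv_right
    · have hk' : k = j + 1 := by omega
      rw [hk', Ygen_self]
      exact (h.1 (j + 1) i (by omega) (by omega) h4).symm

lemma braid_Ygen :
    ∀ j k, 1 ≤ k → k ≤ j → j + 1 ≤ g + n - 1 →
      Ygen σ j k * σ (j + 1) * Ygen σ j k
        = σ (j + 1) * Ygen σ j k * σ (j + 1) := by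
  intro j
  induction j with
  | zero => intro k h1 h2 h3; omega
  | succ j ih =>
    intro k h1 h2 h3
    rcases Nat.lt_or_ge k (j + 1) with hk | hk
    · have hkj : k ≤ j := by omega
      rw [Ygen_succ σ hkj]
      exact braid_conj (ih k h1 hkj (by omega))
        (h.2 (j + 1) (by omega) (by omega))
        ((commute_Ygen h j k (j + 1 + 1) h1 hkj (by omega) (by omega)).eq.symm)
    · have hk' : k = j + 1 := by omega
      rw [hk', Ygen_self]
      exact h.2 (j + 1) (by omega) (by omega)

lemma conj_Ygen :
    ∀ j m k, 1 ≤ k → k ≤ m → m + 1 ≤ j → j ≤ g + n - 1 →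
      (Ygen σ j (m + 1))⁻¹ * Ygen σ j k * Ygen σ j (m + 1) = Ygen σ m k := by
  intro j
  induction j with
  | zero => intro m k h1 h2 h3 h4; omega
  | succ j ih =>
    intro m k h1 h2 h3 h4
    rcases Nat.lt_or_ge (m + 1) (j + 1) with hm | hm
    · have hmj : m + 1 ≤ j := by omega
      have hkj : k ≤ j := by omega
      have e := ih m k h1 h2 hmj (by omega)
      have c : Commute (σ (j + 1)) (Ygen σ m k) :=
        commute_Ygen h m k (j + 1) h1 h2 (by omega) h4
      calc (Ygen σ (j + 1) (m + 1))⁻¹ * Ygen σ (j + 1) k * Ygen σ (j + 1) (m + 1)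
          = σ (j + 1) * ((Ygen σ j (m + 1))⁻¹ * Ygen σ j k * Ygen σ j (m + 1))
              * (σ (j + 1))⁻¹ := by
            rw [Ygen_succ σ hmj, Ygen_succ σ hkj]; group
        _ = σ (j + 1) * Ygen σ m k * (σ (j + 1))⁻¹ := by rw [e]
        _ = Ygen σ m k := by rw [c.eq]; group
    · have hm' : m = j := by omega
      have hkj : k ≤ j := by omega
      rw [hm', Ygen_succ σ hkj, Ygen_self]
      group

end BraidSystem

end Stmt14Aux

open Stmt14Aux in
/-- In the braid group `B_{g+n}`, the elements `τ_k = a_{k,g+1}` (`k = 1,…,g`) together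
with `σ_{g+1},…,σ_{g+n-1}` satisfy all the defining relations of the handlebody braid
group `B_{g,n}`. -/
theorem stmt14 {G : Type*} [Group G] (g n : ℕ) (σ : ℕ → G)
    (h : IsBraidSystem (g + n) σ) (τ : ℕ → G) (hτ : ∀ k, τ k = braidA σ k (g + 1)) :
    (∀ i j, g + 1 ≤ i → i + 1 < j → j ≤ g + n - 1 → σ i * σ j = σ j * σ i) ∧
    (∀ i, g + 1 ≤ i → i + 1 ≤ g + n - 1 →
      σ i * σ (i + 1) * σ i = σ (i + 1) * σ i * σ (i + 1)) ∧
    (∀ k i, 1 ≤ k → k ≤ g → g + 2 ≤ i → i ≤ g + n - 1 → τ k * σ i = σ i * τ k) ∧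
    (∀ k, 1 ≤ k → k ≤ g → 2 ≤ n →
      τ k * (σ (g + 1) * τ k * σ (g + 1)) = (σ (g + 1) * τ k * σ (g + 1)) * τ k) ∧
    (∀ k l, 1 ≤ k → k ≤ g - 1 → 1 ≤ l → l ≤ g - k → 2 ≤ n →
      τ k * ((σ (g + 1))⁻¹ * τ (k + l) * σ (g + 1)) =
        ((σ (g + 1))⁻¹ * τ (k + l) * σ (g + 1)) * τ k) := by
  refine ⟨?_, ?_, ?_, ?_, ?_⟩
  · intro i j h1 h2 h3
    exact h.1 i j (by omega) h2 h3
  · intro i h1 h2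
    exact h.2 i (by omega) h2
  · intro k i h1 h2 h3 h4
    rw [hτ k, tau_eq_sq σ k g]
    exact ((commute_Ygen h g k i h1 h2 (by omega) h4).pow_right 2).eq.symm
  · intro k h1 h2 hn
    rw [hτ k, tau_eq_sq σ k g]
    exact rel4_abs (braid_Ygen h g k h1 h2 (by omega))
  · intro k l h1 h2 h3 h4 hn
    obtain ⟨m, hm⟩ : ∃ m, k + l = m + 1 := ⟨k + l - 1, by omega⟩
    rw [hτ k, hτ (k + l), hm, tau_eq_sq σ k g, tau_eq_sq σ (m + 1) g]
    have hkm : k ≤ m := by omega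
    have hmg : m + 1 ≤ g := by omega
    apply rel5_abs
    · exact braid_Ygen h g (m + 1) (by omega) hmg (by omega)
    · rw [conj_Ygen h g m k h1 hkm hmg (by omega)]
      exact (commute_Ygen h m k (g + 1) h1 hkm (by omega) (by omega)).eq.symm
end

section
/- In the group G_{1,n} = B_{1,n}/⟨⟨σ_i²⟩⟩ (quotient of the Artin group of type B by the squares of the σ generators), the images b_1,…,b_n of the elements t_i = σ_i σ_{i-1} ··· σ_1 t σ_1 ··· σ_{i-1} σ_i pairwise commute. -/
/-- Defining relators of `G_{1,n} = B_{1,n}/⟨⟨σ_i²⟩⟩`: the Artin group of type B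
with generators `t` (coded `0`) and `σ_1, …, σ_{n-1}` (coded `1, …, n-1`),
quotiented by the squares of the `σ` generators. Unused generators `σ_i`, `i ≥ n`,
are made trivial. -/
def typeBModSqRels (n : ℕ) : Set (FreeGroup ℕ) :=
  {r | (∃ i j, 1 ≤ i ∧ i + 1 < j ∧ j ≤ n - 1 ∧
          r = FreeGroup.of i * FreeGroup.of j * (FreeGroup.of j * FreeGroup.of i)⁻¹) ∨
       (∃ i, 1 ≤ i ∧ i + 1 ≤ n - 1 ∧
          r = FreeGroup.of i * FreeGroup.of (i + 1) * FreeGroup.of i *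
              (FreeGroup.of (i + 1) * FreeGroup.of i * FreeGroup.of (i + 1))⁻¹) ∨
       (2 ≤ n ∧
          r = FreeGroup.of 0 * FreeGroup.of 1 * FreeGroup.of 0 * FreeGroup.of 1 *
              (FreeGroup.of 1 * FreeGroup.of 0 * FreeGroup.of 1 * FreeGroup.of 0)⁻¹) ∨
       (∃ i, 2 ≤ i ∧ i ≤ n - 1 ∧
          r = FreeGroup.of 0 * FreeGroup.of i * (FreeGroup.of i * FreeGroup.of 0)⁻¹) ∨
       (∃ i, 1 ≤ i ∧ i ≤ n - 1 ∧ r = (FreeGroup.of i) ^ 2) ∨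
       (∃ i, n ≤ i ∧ r = FreeGroup.of i)}

/-- The group `G_{1,n}`. -/
abbrev G1n (n : ℕ) : Type := PresentedGroup (typeBModSqRels n)

/-- The image in `G_{1,n}` of the element
`t_i = σ_i σ_{i-1} ⋯ σ_1 t σ_1 ⋯ σ_{i-1} σ_i` (with `t_0 = t`). -/
def tElt (n : ℕ) (i : ℕ) : G1n n :=
  (((List.range' 1 i).reverse.map fun k => (PresentedGroup.of k : G1n n)).prod) *
    PresentedGroup.of 0 *
    (((List.range' 1 i).map fun k => (PresentedGroup.of k : G1n n)).prod)

namespace G1nAux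

def sg (n : ℕ) (k : ℕ) : G1n n := PresentedGroup.of k

variable {n : ℕ}

lemma rel_one {r : FreeGroup ℕ} (h : r ∈ typeBModSqRels n) :
    PresentedGroup.mk (typeBModSqRels n) r = 1 :=
  (QuotientGroup.eq_one_iff _).mpr (Subgroup.subset_normalClosure h)

lemma sg_triv {k : ℕ} (hk : n ≤ k) : sg n k = 1 := by
  have hr : FreeGroup.of k ∈ typeBModSqRels n :=
    Or.inr (Or.inr (Or.inr (Or.inr (Or.inr ⟨k, hk, rfl⟩))))
  exact rel_one hr

lemma comm_ss {i k : ℕ} (hi : 1 ≤ i) (hik : i + 2 ≤ k) : Commute (sg n i) (sg n k) := by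
  by_cases hk : k ≤ n - 1
  · have hr : FreeGroup.of i * FreeGroup.of k * (FreeGroup.of k * FreeGroup.of i)⁻¹
        ∈ typeBModSqRels n := Or.inl ⟨i, k, hi, by omega, hk, rfl⟩
    have h := rel_one hr
    rw [map_mul, map_mul, map_inv, map_mul] at h
    exact mul_inv_eq_one.mp h
  · rw [sg_triv (show n ≤ k by omega)]
    exact Commute.one_right _

lemma comm_ts {k : ℕ} (hk : 2 ≤ k) : Commute (sg n 0) (sg n k) := by
  by_cases hkn : k ≤ n - 1
  · have hr : FreeGroup.of 0 * FreeGroup.of k * (FreeGroup.of k * FreeGroup.of 0)⁻¹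
        ∈ typeBModSqRels n := Or.inr (Or.inr (Or.inr (Or.inl ⟨k, hk, hkn, rfl⟩)))
    have h := rel_one hr
    rw [map_mul, map_mul, map_inv, map_mul] at h
    exact mul_inv_eq_one.mp h
  · rw [sg_triv (show n ≤ k by omega)]
    exact Commute.one_right _

lemma sq {k : ℕ} (hk : 1 ≤ k) : sg n k * sg n k = 1 := by
  by_cases hkn : k ≤ n - 1
  · have hr : (FreeGroup.of k) ^ 2 ∈ typeBModSqRels n :=
      Or.inr (Or.inr (Or.inr (Or.inr (Or.inl ⟨k, hk, hkn, rfl⟩))))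
    have h := rel_one hr
    rw [map_pow, pow_two] at h
    exact h
  · by_cases hn : n ≤ k
    · rw [sg_triv hn, one_mul]
    · omega

lemma inv_sg {k : ℕ} (hk : 1 ≤ k) : (sg n k)⁻¹ = sg n k :=
  inv_eq_of_mul_eq_one_left (sq hk)

lemma braid {i : ℕ} (hi : 1 ≤ i) (h : i + 1 ≤ n - 1) :
    sg n i * sg n (i + 1) * sg n i = sg n (i + 1) * sg n i * sg n (i + 1) := by
  have hr : FreeGroup.of i * FreeGroup.of (i + 1) * FreeGroup.of i *
      (FreeGroup.of (i + 1) * FreeGroup.of i * FreeGroup.of (i + 1))⁻¹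
      ∈ typeBModSqRels n := Or.inr (Or.inl ⟨i, hi, h, rfl⟩)
  have hh := rel_one hr
  rw [map_mul, map_mul, map_mul, map_inv, map_mul, map_mul] at hh
  exact mul_inv_eq_one.mp hh

lemma trel (h : 2 ≤ n) :
    sg n 0 * sg n 1 * sg n 0 * sg n 1 = sg n 1 * sg n 0 * sg n 1 * sg n 0 := by
  have hr : FreeGroup.of 0 * FreeGroup.of 1 * FreeGroup.of 0 * FreeGroup.of 1 *
      (FreeGroup.of 1 * FreeGroup.of 0 * FreeGroup.of 1 * FreeGroup.of 0)⁻¹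
      ∈ typeBModSqRels n := Or.inr (Or.inr (Or.inl ⟨h, rfl⟩))
  have hh := rel_one hr
  rw [map_mul, map_mul, map_mul, map_mul, map_inv, map_mul, map_mul, map_mul] at hh
  exact mul_inv_eq_one.mp hh

lemma T_zero : tElt n 0 = sg n 0 := by
  simp [tElt, sg]

lemma T_succ (i : ℕ) : tElt n (i + 1) = sg n (i + 1) * tElt n i * sg n (i + 1) := by
  have h : List.range' 1 (i + 1) = List.range' 1 i ++ [i + 1] := by
    rw [List.range'_concat, Nat.one_mul, Nat.add_comm 1 i]
  simp only [tElt, h, List.reverse_append, List.map_append, List.prod_append,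
    List.map_cons, List.map_nil, List.prod_cons, List.prod_nil, List.reverse_cons,
    List.reverse_nil, List.nil_append, sg]
  simp only [mul_assoc, mul_one]

lemma comm_sT {i k : ℕ} (hk : i + 2 ≤ k) (hk1 : 1 ≤ k) : Commute (sg n k) (tElt n i) := by
  induction i with
  | zero => rw [T_zero]; exact (comm_ts (by omega)).symm
  | succ i ih =>
    rw [T_succ]
    have h1 : Commute (sg n k) (sg n (i + 1)) := (comm_ss (by omega) (by omega)).symm
    exact (h1.mul_right (ih (by omega))).mul_right h1

lemma conj_comm {G : Type*} [Group G] {a b : G} (g : G) (h : Commute a b) :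
    Commute (g * a * g⁻¹) (g * b * g⁻¹) := by
  simpa using h.map (MulAut.conj g).toMonoidHom

lemma comm_adj : ∀ i, i + 1 ≤ n - 1 → Commute (tElt n i) (tElt n (i + 1)) := by
  intro i
  induction i with
  | zero =>
    intro h
    rw [T_zero, T_succ, T_zero]
    show sg n 0 * (sg n 1 * sg n 0 * sg n 1) = (sg n 1 * sg n 0 * sg n 1) * sg n 0
    have := trel (show 2 ≤ n by omega)
    simp only [mul_assoc] at this ⊢
    exact this
  | succ i ih =>
    intro h
    set a := tElt n i with ha
    set u := sg n (i + 1) with hu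
    set v := sg n (i + 2) with hv
    have hu1 : u * u = 1 := sq (by omega)
    have hv1 : v * v = 1 := sq (by omega)
    have hva : v * a = a * v := (comm_sT (i := i) (k := i + 2) (by omega) (by omega)).eq
    have hbr : u * v * u = v * u * v := by
      have := braid (n := n) (i := i + 1) (by omega) (by omega)
      simpa using this
    have ihc : Commute a (u * a * u) := by
      rw [hu, ha, ← T_succ]; exact ih (by omega)
    have key : Commute ((u * v) * a * (u * v)⁻¹) ((u * v) * (u * a * u) * (u * v)⁻¹) :=
      conj_comm _ ihc
    have hg : (u * v)⁻¹ = v * u := by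
      rw [mul_inv_rev, inv_sg (by omega), inv_sg (by omega)]
    have e1 : u * v * a * (v * u) = u * a * u := by
      calc u * v * a * (v * u) = u * (v * a) * (v * u) := by rw [mul_assoc u v a]
        _ = u * (a * v) * (v * u) := by rw [hva]
        _ = u * a * (v * (v * u)) := by simp only [mul_assoc]
        _ = u * a * u := by rw [← mul_assoc v v u, hv1, one_mul]
    have hvav : v * a * v = a := by rw [hva, mul_assoc, hv1, mul_one]
    have e2 : u * v * (u * a * u) * (v * u) = v * (u * a * u) * v := by
      calc u * v * (u * a * u) * (v * u)
          = (u * v * u) * a * (u * v * u) := by simp only [mul_assoc]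
        _ = (v * u * v) * a * (v * u * v) := by rw [hbr]
        _ = v * u * (v * a * v) * u * v := by simp only [mul_assoc]
        _ = v * u * a * u * v := by rw [hvav]
        _ = v * (u * a * u) * v := by simp only [mul_assoc]
    rw [hg, e1, e2] at key
    rw [T_succ (i + 1), T_succ i, ← hu, ← hv, ← ha]
    exact key

lemma comm_lt : ∀ j i, i < j → j ≤ n - 1 → Commute (tElt n i) (tElt n j) := by
  intro j
  induction j with
  | zero => omega
  | succ j ih =>
    intro i hij hj
    by_cases h : i = j
    · subst h; exact comm_adj i hj
    · rw [T_succ]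
      have h1 : Commute (tElt n i) (sg n (j + 1)) := (comm_sT (by omega) (by omega)).symm
      exact (h1.mul_right (ih i (by omega) (by omega))).mul_right h1

end G1nAux

/-- In `G_{1,n} = B_{1,n}/⟨⟨σ_i²⟩⟩`, the images `b_1, …, b_n` of the elements
`t = t_0, t_1, …, t_{n-1}` pairwise commute. -/
theorem stmt18 (n : ℕ) (hn : 1 ≤ n) (i j : ℕ) (hi : i ≤ n - 1) (hj : j ≤ n - 1) :
    Commute (tElt n i) (tElt n j) := by
  rcases lt_trichotomy i j with h | h | h
  · exact G1nAux.comm_lt j i h hj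
  · rw [h]
  · exact (G1nAux.comm_lt i j h hi).symm
end
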